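/- arXiv:math/0107223 — 2 statements merged into one kernel-verified Lean document; each statement's English description precedes it below -/
import Mathlib

section
/- Let w = (π, λ) act K-linearly on K^d by w(e_j) = t^{λ_j} e_{π(j)}, and set L_i = w(Λ_i); assume Λ_l ⊇ L_l ⊇ tΛ_l for all l (which holds when w is μ-permissible). Then for every i ∈ {1,…,d}, one has L_{i−1} ⊄ Λ_i if and only if w(e_i) = e_i, i.e. if and only if π(i) = i and λ_i = 0. -/
noncomputable section

variable (k : Type*) [Field k] (d : ℕ)

/-- The element `t` of `K = k((t))`, as a Laurent series. -/
def tK : LaurentSeries k := HahnSeries.single 1 1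

/-- The monomial `t^m` of `K = k((t))`, for `m : ℤ`. -/
def tpow (m : ℤ) : LaurentSeries k := HahnSeries.single m 1

/-- The standard basis vector `e_j` of `K^d` (0-indexed: `e_j` here is `e_{j+1}` of the paper). -/
def stdVec (j : Fin d) : Fin d → LaurentSeries k := Pi.single j 1

/-- The standard lattice `Λ_i ⊆ K^d`: the `O = k[[t]]`-submodule generated by
`t e_1, …, t e_i, e_{i+1}, …, e_d` (0-indexed). -/
def Lam (i : ℕ) : Submodule (PowerSeries k) (Fin d → LaurentSeries k) :=
  Submodule.span _ (Set.range fun j : Fin d =>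
    if (j : ℕ) < i then tK k • stdVec k d j else stdVec k d j)

/-- Multiplication by `t` on `K^d`, as an `O`-linear endomorphism. -/
def tMul : (Fin d → LaurentSeries k) →ₗ[PowerSeries k] (Fin d → LaurentSeries k) :=
  (LinearMap.lsmul (LaurentSeries k) (Fin d → LaurentSeries k) (tK k)).restrictScalars
    (PowerSeries k)

/-- The lattice `tΛ_i`. -/
def tLam (i : ℕ) : Submodule (PowerSeries k) (Fin d → LaurentSeries k) :=
  (Lam k d i).map (tMul k d)

/-- The `K`-linear action of `w = (π, λ)` on `K^d`, determined by
`w(e_j) = t^{λ_j} e_{π(j)}`. -/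
def wMap (π : Equiv.Perm (Fin d)) (lam : Fin d → ℤ) :
    (Fin d → LaurentSeries k) →ₗ[LaurentSeries k] (Fin d → LaurentSeries k) :=
  (Pi.basisFun (LaurentSeries k) (Fin d)).constr (LaurentSeries k)
    fun j => tpow k (lam j) • stdVec k d (π j)

/-- The lattice `w(Λ_i)`. -/
def wLam (π : Equiv.Perm (Fin d)) (lam : Fin d → ℤ) (i : ℕ) :
    Submodule (PowerSeries k) (Fin d → LaurentSeries k) :=
  (Lam k d i).map ((wMap k d π lam).restrictScalars (PowerSeries k))


section Aux

variable {k} {d}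

lemma ofPS_coeff_neg (f : PowerSeries k) {n : ℤ} (hn : n < 0) :
    (HahnSeries.ofPowerSeries ℤ k f).coeff n = 0 := by
  rw [HahnSeries.ofPowerSeries_apply, HahnSeries.embDomain_notin_range]
  rintro ⟨m, hm⟩
  simp at hm
  omega

lemma tpow_mul (a b : ℤ) : tpow k a * tpow k b = tpow k (a + b) := by
  rw [tpow, tpow, tpow, HahnSeries.single_mul_single, one_mul]

lemma tpow_zero : tpow k 0 = 1 := HahnSeries.single_zero_one

lemma tpow_smul_smul (a b : ℤ) (v : Fin d → LaurentSeries k) :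
    tpow k a • tpow k b • v = tpow k (a + b) • v := by
  funext p
  simp only [Pi.smul_apply, smul_eq_mul, ← mul_assoc, tpow_mul]

lemma mem_span_tpow {m c : ℤ} :
    tpow k m ∈ Submodule.span (PowerSeries k) {tpow k c} ↔ c ≤ m := by
  constructor
  · intro hm
    rw [Submodule.mem_span_singleton] at hm
    obtain ⟨f, hf⟩ := hm
    by_contra hc
    push_neg at hc
    have h1 : (f • tpow k c).coeff m = 0 := by
      rw [Algebra.smul_def, LaurentSeries.coe_algebraMap]
      have h2 := HahnSeries.coeff_mul_single_add (r := (1 : k))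
        (x := HahnSeries.ofPowerSeries ℤ k f) (a := m - c) (b := c)
      have hm' : m - c + c = m := by omega
      rw [hm'] at h2
      rw [tpow, h2, ofPS_coeff_neg f (by omega), zero_mul]
    rw [hf, tpow, HahnSeries.coeff_single_same] at h1
    exact one_ne_zero h1
  · intro hc
    rw [Submodule.mem_span_singleton]
    refine ⟨PowerSeries.X ^ (m - c).toNat, ?_⟩
    have hmc : m - c + c = m := by omega
    rw [Algebra.smul_def, LaurentSeries.coe_algebraMap, HahnSeries.ofPowerSeries_X_pow,
      Int.toNat_of_nonneg (by omega), tpow, tpow, HahnSeries.single_mul_single, one_mul, hmc]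

lemma gen_eq (M : ℕ) (j : Fin d) :
    (if (j : ℕ) < M then tK k • stdVec k d j else stdVec k d j)
      = tpow k (if (j : ℕ) < M then 1 else 0) • stdVec k d j := by
  split_ifs
  · rfl
  · rw [tpow_zero, one_smul]

lemma mem_span_of_mem_Lam {M : ℕ} {v : Fin d → LaurentSeries k} (hv : v ∈ Lam k d M)
    (p : Fin d) :
    v p ∈ Submodule.span (PowerSeries k) {tpow k (if (p : ℕ) < M then 1 else 0)} := by
  have hle : Lam k d M ≤ Submodule.comap
      (LinearMap.proj (R := PowerSeries k) (φ := fun _ : Fin d => LaurentSeries k) p)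
      (Submodule.span (PowerSeries k) {tpow k (if (p : ℕ) < M then 1 else 0)}) := by
    rw [Lam, Submodule.span_le]
    rintro x ⟨j, rfl⟩
    simp only [SetLike.mem_coe, Submodule.mem_comap, LinearMap.proj_apply]
    rw [gen_eq]
    by_cases hj : j = p
    · subst hj
      have hval : (tpow k (if (j : ℕ) < M then 1 else 0) • stdVec k d j) j
          = tpow k (if (j : ℕ) < M then 1 else 0) := by
        simp [stdVec, Pi.single_eq_same]
      rw [hval]
      exact Submodule.mem_span_singleton_self _
    · have hval : (tpow k (if (j : ℕ) < M then 1 else 0) • stdVec k d j) p = 0 := by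
        rw [Pi.smul_apply, stdVec, Pi.single_eq_of_ne (Ne.symm hj), smul_zero]
      rw [hval]
      exact Submodule.zero_mem _
  exact hle hv

lemma tpow_smul_stdVec_mem_Lam_iff {M : ℕ} {m : ℤ} {p : Fin d} :
    tpow k m • stdVec k d p ∈ Lam k d M ↔ (if (p : ℕ) < M then (1 : ℤ) else 0) ≤ m := by
  constructor
  · intro hm
    have h1 := mem_span_of_mem_Lam hm p
    have h2 : (tpow k m • stdVec k d p) p = tpow k m := by
      simp [stdVec, Pi.single_eq_same]
    rw [h2] at h1
    exact mem_span_tpow.mp h1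
  · intro hc
    set c : ℤ := if (p : ℕ) < M then 1 else 0 with hcdef
    have hg : tpow k c • stdVec k d p ∈ Lam k d M :=
      Submodule.subset_span ⟨p, gen_eq M p⟩
    have he : (PowerSeries.X ^ (m - c).toNat : PowerSeries k) • (tpow k c • stdVec k d p)
        = tpow k m • stdVec k d p := by
      have hmc : m - c + c = m := by omega
      rw [← algebraMap_smul (LaurentSeries k)
          (PowerSeries.X ^ (m - c).toNat : PowerSeries k) (tpow k c • stdVec k d p),
        LaurentSeries.coe_algebraMap, HahnSeries.ofPowerSeries_X_pow,
        Int.toNat_of_nonneg (by omega),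
        show ((HahnSeries.single (m - c) (1 : k) : LaurentSeries k)) = tpow k (m - c) from rfl,
        tpow_smul_smul, hmc]
    rw [← he]
    exact Submodule.smul_mem _ _ hg

lemma wMap_stdVec (π : Equiv.Perm (Fin d)) (lam : Fin d → ℤ) (j : Fin d) :
    wMap k d π lam (stdVec k d j) = tpow k (lam j) • stdVec k d (π j) := by
  have h := (Pi.basisFun (LaurentSeries k) (Fin d)).constr_basis (LaurentSeries k)
    (fun j => tpow k (lam j) • stdVec k d (π j)) j
  rw [wMap, show stdVec k d j = Pi.basisFun (LaurentSeries k) (Fin d) j by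
    rw [Pi.basisFun_apply]; rfl]
  exact h

lemma wLam_le_iff (π : Equiv.Perm (Fin d)) (lam : Fin d → ℤ) (l : ℕ)
    (N : Submodule (PowerSeries k) (Fin d → LaurentSeries k)) :
    wLam k d π lam l ≤ N ↔ ∀ j : Fin d,
      tpow k (lam j + if (j : ℕ) < l then 1 else 0) • stdVec k d (π j) ∈ N := by
  have key : ∀ j : Fin d,
      wMap k d π lam (if (j : ℕ) < l then tK k • stdVec k d j else stdVec k d j)
        = tpow k (lam j + if (j : ℕ) < l then 1 else 0) • stdVec k d (π j) := by
    intro j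
    rw [gen_eq, map_smul, wMap_stdVec, tpow_smul_smul, add_comm]
  rw [wLam, Submodule.map_le_iff_le_comap, Lam, Submodule.span_le, Set.range_subset_iff]
  refine forall_congr' fun j => ?_
  rw [SetLike.mem_coe, Submodule.mem_comap, LinearMap.restrictScalars_apply, key]

end Aux

/-- (0-indexed: for `i ∈ {1,…,d}` of the paper, the condition
`L_{i-1} ⊄ Λ_i` becomes `L_i ⊄ Λ_{i+1}` with `i : Fin d`.) With `L_l = w(Λ_l)` and
assuming `Λ_l ⊇ L_l ⊇ tΛ_l` for all `l`, one has `L_{i-1} ⊄ Λ_i` iff `w(e_i) = e_i`,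
i.e. iff `π(i) = i` and `λ_i = 0`. -/
theorem stmt10 (π : Equiv.Perm (Fin d)) (lam : Fin d → ℤ)
    (h : ∀ l : ℕ, l ≤ d → wLam k d π lam l ≤ Lam k d l ∧ tLam k d l ≤ wLam k d π lam l)
    (i : Fin d) :
    ¬ (wLam k d π lam (i : ℕ) ≤ Lam k d ((i : ℕ) + 1)) ↔ (π i = i ∧ lam i = 0) := by
  have hc : ∀ l : ℕ, l ≤ d → ∀ j : Fin d,
      (if ((π j : Fin d) : ℕ) < l then (1 : ℤ) else 0)
        ≤ lam j + (if (j : ℕ) < l then 1 else 0) := by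
    intro l hl j
    exact tpow_smul_stdVec_mem_Lam_iff.mp ((wLam_le_iff π lam l (Lam k d l)).mp (h l hl).1 j)
  constructor
  · intro hns
    rw [wLam_le_iff] at hns
    push_neg at hns
    obtain ⟨j, hj⟩ := hns
    rw [tpow_smul_stdVec_mem_Lam_iff] at hj
    push_neg at hj
    have h1 := hc (i : ℕ) (le_of_lt i.isLt) j
    have h2 := hc 0 (Nat.zero_le d) j
    have h3 := hc (j : ℕ) (le_of_lt j.isLt) j
    simp only [Nat.not_lt_zero, if_false, add_zero] at h2
    simp only [lt_irrefl, if_false, add_zero] at h3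
    have hkey : ((π j : Fin d) : ℕ) = (i : ℕ) ∧ (j : ℕ) = (i : ℕ) ∧ lam j = 0 := by
      split_ifs at hj h1 h3 <;> omega
    obtain ⟨hk1, hk2, hk3⟩ := hkey
    have hji : j = i := Fin.ext hk2
    subst hji
    exact ⟨Fin.ext hk1, hk3⟩
  · rintro ⟨hπ, hl0⟩ hle
    have hmem := (wLam_le_iff π lam (i : ℕ) (Lam k d ((i : ℕ) + 1))).mp hle i
    rw [tpow_smul_stdVec_mem_Lam_iff] at hmem
    rw [hπ, hl0] at hmem
    split_ifs at hmem <;> omega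


end
end

section
/- Let d = 2n and let w = (π, λ) satisfy the GSp(2n) conditions π ∘ ι = ι ∘ π and λ_j + λ_{ι(j)} = 1 for all j (where ι(j) = 2n+1−j), and assume Λ_l ⊇ w(Λ_l) ⊇ tΛ_l for all l (μ-permissibility). Set L_i = w(Λ_i). Then the number of indices i ∈ {1,…,2n} for which the induced k-linear map L_i/tΛ_i → Λ_{i−1}/tΛ_{i−1} is injective equals r(w) = #{j : π(j) = j and λ_j = 1}, which also equals half the number of fixed points of π. -/
noncomputable section

variable (k : Type*) [Field k] (d : ℕ)

/-! ### Auxiliary lemmas -/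

lemma psmul_eq (f : PowerSeries k) (x : LaurentSeries k) :
    f • x = (HahnSeries.ofPowerSeries ℤ k f) * x := by
  rw [← LaurentSeries.coe_algebraMap]; exact Algebra.smul_def f x

lemma tpow_mem_span {a b : ℤ} :
    tpow k b ∈ Submodule.span (PowerSeries k) {tpow k a} ↔ a ≤ b := by
  constructor
  · intro hmem
    obtain ⟨f, hf⟩ := Submodule.mem_span_singleton.mp hmem
    by_contra hab
    push_neg at hab
    have h1 : ((HahnSeries.ofPowerSeries ℤ k f) * HahnSeries.single a (1:k)).coeff b = 1 := by
      rw [← psmul_eq]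
      have h0 : tpow k a = HahnSeries.single a (1:k) := rfl
      rw [← h0, hf]
      simp [tpow]
    have hb : b = (b - a) + a := by ring
    rw [hb, HahnSeries.coeff_mul_single_add] at h1
    rw [PowerSeries.coeff_coe, if_pos (by omega : b - a < 0)] at h1
    simp at h1
  · intro hab
    refine Submodule.mem_span_singleton.mpr ⟨PowerSeries.X ^ (b - a).toNat, ?_⟩
    rw [psmul_eq, HahnSeries.ofPowerSeries_X_pow]
    show HahnSeries.single ((b-a).toNat : ℤ) (1:k) * HahnSeries.single a 1 = HahnSeries.single b 1
    rw [HahnSeries.single_mul_single, one_mul,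
      show ((b - a).toNat : ℤ) + a = b by omega]

lemma span_tpow_le {a b : ℤ} (hab : a ≤ b) :
    Submodule.span (PowerSeries k) {tpow k b} ≤ Submodule.span (PowerSeries k) {tpow k a} :=
  (Submodule.span_singleton_le_iff_mem _ _).mpr ((tpow_mem_span k).mpr hab)

/-- The pi-form lattice with exponent vector `μ`. -/
def latt (μ : Fin d → ℤ) : Submodule (PowerSeries k) (Fin d → LaurentSeries k) :=
  Submodule.pi Set.univ fun p => Submodule.span (PowerSeries k) {tpow k (μ p)}

lemma span_single_range (v : Fin d → LaurentSeries k) :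
    Submodule.span (PowerSeries k)
        (Set.range fun j => (Pi.single j (v j) : Fin d → LaurentSeries k)) =
      Submodule.pi Set.univ fun j => Submodule.span (PowerSeries k) {v j} := by
  apply le_antisymm
  · rw [Submodule.span_le]
    rintro _ ⟨j, rfl⟩ p _
    rcases eq_or_ne p j with rfl | hpj
    · simpa using Submodule.mem_span_singleton_self (v p)
    · simp [Pi.single_eq_of_ne hpj]
  · intro x hx
    rw [← Finset.univ_sum_single x]
    refine Submodule.sum_mem _ fun j _ => ?_
    obtain ⟨f, hf⟩ := Submodule.mem_span_singleton.mp (hx j (Set.mem_univ j))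
    have key : (Pi.single j (x j) : Fin d → LaurentSeries k)
        = f • (Pi.single j (v j) : Fin d → LaurentSeries k) := by
      funext p
      rcases eq_or_ne p j with rfl | hpj
      · rw [Pi.smul_apply, Pi.single_eq_same, Pi.single_eq_same, hf]
      · rw [Pi.smul_apply, Pi.single_eq_of_ne hpj, Pi.single_eq_of_ne hpj]
        exact (smul_zero (A := LaurentSeries k) f).symm
    rw [key]
    exact Submodule.smul_mem _ _ (Submodule.subset_span ⟨j, rfl⟩)

lemma single_tpow_mem_latt_iff {μ : Fin d → ℤ} {p : Fin d} {m : ℤ} :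
    (Pi.single p (tpow k m) : Fin d → LaurentSeries k) ∈ latt k d μ ↔ μ p ≤ m := by
  constructor
  · intro hmem
    have := hmem p (Set.mem_univ p)
    rw [Pi.single_eq_same] at this
    exact (tpow_mem_span k).mp this
  · intro hm q _
    rcases eq_or_ne q p with rfl | hqp
    · rw [Pi.single_eq_same]; exact (tpow_mem_span k).mpr hm
    · rw [Pi.single_eq_of_ne hqp]; exact Submodule.zero_mem _

lemma latt_le_latt {μ ν : Fin d → ℤ} :
    latt k d μ ≤ latt k d ν ↔ ∀ p, ν p ≤ μ p := by
  constructor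
  · intro hle p
    exact (single_tpow_mem_latt_iff k d).mp
      (hle ((single_tpow_mem_latt_iff k d).mpr le_rfl))
  · intro hp x hx p _
    exact span_tpow_le k (hp p) (hx p (Set.mem_univ p))

lemma smul_single (y z : LaurentSeries k) (j : Fin d) :
    y • (Pi.single j z : Fin d → LaurentSeries k) = Pi.single j (y * z) := by
  funext p
  rcases eq_or_ne p j with rfl | hpj
  · rw [Pi.smul_apply, Pi.single_eq_same, Pi.single_eq_same, smul_eq_mul]
  · rw [Pi.smul_apply, Pi.single_eq_of_ne hpj, Pi.single_eq_of_ne hpj, smul_zero]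

/-- The exponent of the standard lattice. -/
def cc (i : ℕ) (p : Fin d) : ℤ := if (p : ℕ) < i then 1 else 0

lemma Lam_span (i : ℕ) :
    Lam k d i = Submodule.span (PowerSeries k)
      (Set.range fun j => (Pi.single j (tpow k (cc d i j)) : Fin d → LaurentSeries k)) := by
  have hfun : (fun j : Fin d => if (j : ℕ) < i then tK k • stdVec k d j else stdVec k d j)
      = fun j => (Pi.single j (tpow k (cc d i j)) : Fin d → LaurentSeries k) := by
    funext j
    by_cases hj : (j : ℕ) < i
    · rw [if_pos hj, cc, if_pos hj, stdVec, smul_single, mul_one]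
      rfl
    · rw [if_neg hj, cc, if_neg hj, stdVec, tpow, HahnSeries.single_zero_one]
  rw [Lam, hfun]

lemma Lam_eq (i : ℕ) : Lam k d i = latt k d (cc d i) := by
  rw [Lam_span, span_single_range]; rfl

lemma tMul_single (j : Fin d) (m : ℤ) :
    tMul k d (Pi.single j (tpow k m)) = Pi.single j (tpow k (1 + m)) := by
  show tK k • (Pi.single j (tpow k m) : Fin d → LaurentSeries k) = _
  rw [smul_single, show tK k * tpow k m = tpow k (1 + m) by
    rw [tK, tpow, tpow, HahnSeries.single_mul_single, one_mul]]

lemma tLam_eq (i : ℕ) : tLam k d i = latt k d (fun p => 1 + cc d i p) := by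
  rw [tLam, Lam_span, Submodule.map_span, ← Set.range_comp]
  have : ((tMul k d) ∘ fun j => (Pi.single j (tpow k (cc d i j)) : Fin d → LaurentSeries k))
      = fun j => (Pi.single j (tpow k (1 + cc d i j)) : Fin d → LaurentSeries k) := by
    funext j
    exact tMul_single k d j _
  rw [this, span_single_range]
  rfl

lemma wMap_single (π : Equiv.Perm (Fin d)) (lam : Fin d → ℤ) (j : Fin d) (y : LaurentSeries k) :
    wMap k d π lam (Pi.single j y) = Pi.single (π j) (y * tpow k (lam j)) := by
  have h1 : (Pi.single j y : Fin d → LaurentSeries k)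
      = y • Pi.basisFun (LaurentSeries k) (Fin d) j := by
    rw [Pi.basisFun_apply, smul_single, mul_one]
  rw [h1, map_smul, wMap, Module.Basis.constr_basis, stdVec, smul_single, smul_single, mul_one]

lemma wLam_eq (π : Equiv.Perm (Fin d)) (lam : Fin d → ℤ) (i : ℕ) :
    wLam k d π lam i = latt k d (fun p => lam (π.symm p) + cc d i (π.symm p)) := by
  rw [wLam, Lam_span, Submodule.map_span, ← Set.range_comp]
  have h1 : ((wMap k d π lam).restrictScalars (PowerSeries k) ∘
        fun j => (Pi.single j (tpow k (cc d i j)) : Fin d → LaurentSeries k))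
      = (fun p => (Pi.single p (tpow k (lam (π.symm p) + cc d i (π.symm p)))
          : Fin d → LaurentSeries k)) ∘ π := by
    funext j
    show wMap k d π lam (Pi.single j (tpow k (cc d i j))) = _
    rw [wMap_single]
    simp only [Function.comp_apply, Equiv.symm_apply_apply]
    rw [show tpow k (cc d i j) * tpow k (lam j) = tpow k (lam j + cc d i j) by
      simp only [tpow]; rw [HahnSeries.single_mul_single, one_mul, add_comm]]
  rw [h1, (Equiv.surjective π).range_comp, span_single_range]
  rfl

/-- (0-indexed, `d = 2n`; the involution `ι(j) = 2n+1-j` becomes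
`Fin.rev`, and for `i ∈ {1,…,2n}` the map `L_i/tΛ_i → Λ_{i-1}/tΛ_{i-1}` becomes
`L_{i+1}/tΛ_{i+1} → Λ_i/tΛ_i` with `i : Fin (2n)`.) Let `w = (π, λ)` satisfy the
`GSp(2n)` conditions `π ∘ ι = ι ∘ π` and `λ_j + λ_{ι(j)} = 1`, and assume
`Λ_l ⊇ w(Λ_l) ⊇ tΛ_l` for all `l` (μ-permissibility). Then the number of indices `i`
for which the induced map `L_i/tΛ_i → Λ_{i-1}/tΛ_{i-1}` is injective equals
`r(w) = #{j : π(j) = j and λ_j = 1}`, which also equals half the number of fixed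
points of `π`. -/
theorem stmt11 (n : ℕ) (π : Equiv.Perm (Fin (2 * n))) (lam : Fin (2 * n) → ℤ)
    (hcomm : ∀ j, π j.rev = (π j).rev)
    (hsum : ∀ j, lam j + lam j.rev = 1)
    (h : ∀ l : ℕ, l ≤ 2 * n →
      wLam k (2 * n) π lam l ≤ Lam k (2 * n) l ∧
        tLam k (2 * n) l ≤ wLam k (2 * n) π lam l) :
    Nat.card {i : Fin (2 * n) //
        ∀ x ∈ wLam k (2 * n) π lam ((i : ℕ) + 1),
          x ∈ tLam k (2 * n) (i : ℕ) → x ∈ tLam k (2 * n) ((i : ℕ) + 1)} =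
      Nat.card {j : Fin (2 * n) // π j = j ∧ lam j = 1} ∧
    2 * Nat.card {j : Fin (2 * n) // π j = j ∧ lam j = 1} =
      Nat.card {j : Fin (2 * n) // π j = j} := by
  -- numeric permissibility
  have key : ∀ (j : Fin (2 * n)) (l : ℕ), l ≤ 2 * n →
      cc (2 * n) l (π j) ≤ lam j + cc (2 * n) l j ∧
        lam j + cc (2 * n) l j ≤ 1 + cc (2 * n) l (π j) := by
    intro j l hl
    obtain ⟨h1, h2⟩ := h l hl
    rw [wLam_eq, Lam_eq] at h1
    rw [tLam_eq, wLam_eq] at h2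
    have h1' := (latt_le_latt k (2 * n)).mp h1 (π j)
    have h2' := (latt_le_latt k (2 * n)).mp h2 (π j)
    simp only [Equiv.symm_apply_apply] at h1' h2'
    exact ⟨h1', h2'⟩
  have hlam0 : ∀ j, 0 ≤ lam j := by
    intro j
    have := (key j 0 (by omega)).1
    simp only [cc, Nat.not_lt_zero, if_false, add_zero] at this
    exact this
  have hlam1 : ∀ j, lam j ≤ 1 := by
    intro j
    have := (key j 0 (by omega)).2
    simp only [cc, Nat.not_lt_zero, if_false, add_zero] at this
    omega
  have hfix : ∀ j, lam j = 1 → (π j : ℕ) ≤ (j : ℕ) := by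
    intro j hj
    have h2 := (key j ((j : ℕ) + 1) (by omega)).2
    rw [cc, cc, if_pos (by omega)] at h2
    by_cases hc : ((π j : ℕ)) < (j : ℕ) + 1
    · omega
    · rw [if_neg hc] at h2; omega
  -- the condition is equivalent to being a fixed point with lam = 1
  have hcond : ∀ i : Fin (2 * n),
      (∀ x ∈ wLam k (2 * n) π lam ((i : ℕ) + 1),
          x ∈ tLam k (2 * n) (i : ℕ) → x ∈ tLam k (2 * n) ((i : ℕ) + 1))
        ↔ (π i = i ∧ lam i = 1) := by
    intro i
    rw [wLam_eq, tLam_eq, tLam_eq]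
    constructor
    · intro hc
      have h2 : (2 : ℤ) ≤ lam (π.symm i) + cc (2 * n) ((i : ℕ) + 1) (π.symm i) := by
        by_contra hlt
        push_neg at hlt
        have hx1 : (Pi.single i (tpow k 1) : Fin (2 * n) → LaurentSeries k)
            ∈ latt k (2 * n) (fun p => lam (π.symm p) + cc (2 * n) ((i : ℕ) + 1) (π.symm p)) :=
          (single_tpow_mem_latt_iff k (2 * n)).mpr (by
            show lam (π.symm i) + cc (2 * n) ((i : ℕ) + 1) (π.symm i) ≤ 1
            omega)
        have hx2 : (Pi.single i (tpow k 1) : Fin (2 * n) → LaurentSeries k)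
            ∈ latt k (2 * n) (fun p => 1 + cc (2 * n) (i : ℕ) p) :=
          (single_tpow_mem_latt_iff k (2 * n)).mpr (by
            show (1 : ℤ) + cc (2 * n) (i : ℕ) i ≤ 1
            rw [cc, if_neg (lt_irrefl ((i : ℕ)))]
            norm_num)
        have hx3 : (1 : ℤ) + cc (2 * n) ((i : ℕ) + 1) i ≤ 1 :=
          (single_tpow_mem_latt_iff k (2 * n)).mp (hc _ hx1 hx2)
        rw [cc, if_pos (by omega)] at hx3
        omega
      set j := π.symm i with hjdef
      have hπj : π j = i := π.apply_symm_apply i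
      have hcc : cc (2 * n) ((i : ℕ) + 1) j ≤ 1 := by rw [cc]; split <;> omega
      have hlamj : lam j = 1 := by have := hlam1 j; omega
      have hjlei : (j : ℕ) < (i : ℕ) + 1 := by
        by_contra hcon
        rw [cc, if_neg hcon] at h2
        have := hlam1 j; omega
      have hilej : (i : ℕ) ≤ (j : ℕ) := by
        have := hfix j hlamj; rw [hπj] at this; exact this
      have hji : j = i := Fin.ext (by omega)
      rw [hji] at hπj hlamj
      exact ⟨hπj, hlamj⟩
    · rintro ⟨hπi, hlami⟩ x hx1 hx2 p _
      show x p ∈ Submodule.span (PowerSeries k) {tpow k (1 + cc (2 * n) ((i : ℕ) + 1) p)}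
      rcases eq_or_ne p i with rfl | hpi
      · have hsymm : π.symm p = p := by
          conv_lhs => rw [← hπi]
          exact π.symm_apply_apply p
        have h1 : x p ∈ Submodule.span (PowerSeries k)
            {tpow k (lam (π.symm p) + cc (2 * n) ((p : ℕ) + 1) (π.symm p))} :=
          hx1 p (Set.mem_univ p)
        rw [hsymm, hlami] at h1
        exact h1
      · have h2 : x p ∈ Submodule.span (PowerSeries k)
            {tpow k (1 + cc (2 * n) (i : ℕ) p)} := hx2 p (Set.mem_univ p)
        have hccp : (1 : ℤ) + cc (2 * n) ((i : ℕ) + 1) p = 1 + cc (2 * n) (i : ℕ) p := by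
          have hne : (p : ℕ) ≠ (i : ℕ) := fun hval => hpi (Fin.ext hval)
          rw [cc, cc]
          split_ifs <;> omega
        rw [hccp]
        exact h2
  constructor
  · exact Nat.card_congr (Equiv.subtypeEquivRight hcond)
  · -- combinatorial part
    classical
    have e1 : Nat.card {j : Fin (2 * n) // π j = j ∧ lam j = 1}
        = (Finset.univ.filter fun j : Fin (2 * n) => π j = j ∧ lam j = 1).card := by
      rw [Nat.card_eq_fintype_card, Fintype.card_subtype]
    have e2 : Nat.card {j : Fin (2 * n) // π j = j}
        = (Finset.univ.filter fun j : Fin (2 * n) => π j = j).card := by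
      rw [Nat.card_eq_fintype_card, Fintype.card_subtype]
    rw [e1, e2]
    have hsplit := Finset.card_filter_add_card_filter_not
      (s := Finset.univ.filter fun j : Fin (2 * n) => π j = j)
      (p := fun j => lam j = 1)
    rw [Finset.filter_filter, Finset.filter_filter] at hsplit
    have hbij : (Finset.univ.filter fun j : Fin (2 * n) => π j = j ∧ lam j = 1).card
        = (Finset.univ.filter fun j : Fin (2 * n) => π j = j ∧ ¬lam j = 1).card := by
      apply Finset.card_bij (fun j _ => j.rev)
      · intro j hj
        simp only [Finset.mem_filter, Finset.mem_univ, true_and] at hj ⊢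
        refine ⟨by rw [hcomm, hj.1], ?_⟩
        have := hsum j
        omega
      · intro a ha b hb hab
        exact Fin.rev_injective hab
      · intro b hb
        simp only [Finset.mem_filter, Finset.mem_univ, true_and] at hb
        refine ⟨b.rev, ?_, Fin.rev_rev b⟩
        simp only [Finset.mem_filter, Finset.mem_univ, true_and]
        constructor
        · rw [hcomm, hb.1]
        · have h1 := hsum b
          have h2 := hlam0 b
          have h3 := hlam1 b
          omega
    omega

end
end
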